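/- arXiv:2601.09786 — 4 statements merged into one kernel-verified Lean document; each statement's English description precedes it below -/
import Mathlib

section
/- Let G be a Hermitian M×M matrix with positive diagonal that is diagonally dominant, i.e., g_{ii} ≥ Σ_{j≠i} |g_{ij}| for all i. Then there exists an (M(M+1)/2) × M complex matrix V with at most two non-zero entries in each row such that G = V† V. -/
/-!
Rows of `V` are indexed by the `M(M+1)/2` unordered pairs `{i, j}` of indices. For `i < j` the row
has entry `√|g_ij|` at `i` and `g_ij / √|g_ij|` at `j`, so its Gram matrix is the block
`[[|g_ij|, g_ij], [conj g_ij, |g_ij|]]` on `{i, j}`; the row of `{i, i}` has the single entry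
`√(g_ii - ∑_{j ≠ i} |g_ij|)`, whose radicand is nonnegative by diagonal dominance. Summing the
Gram matrices, each off-diagonal entry of `G` is produced exactly once, and the diagonal entry
`i` collects `(g_ii - ∑_{j ≠ i} |g_ij|) + ∑_{j ≠ i} |g_ij| = g_ii`.
-/

open Finset

theorem Sym2.sum_eq_sum_mk_of_mem {α β : Type*} [Fintype α] [DecidableEq α] [AddCommMonoid β]
    (a : α) {f : Sym2 α → β} (hf : ∀ s, f s ≠ 0 → a ∈ s) : ∑ s, f s = ∑ j, f s(a, j) := by
  refine (Finset.sum_subset (subset_univ _) fun s _ hs => ?_).symm.trans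
    (Finset.sum_map univ (Sym2.mkEmbedding a) f)
  by_contra h
  obtain ⟨j, rfl⟩ := Sym2.mem_iff_exists.mp (hf s h)
  exact hs (mem_map_of_mem _ (mem_univ j))

namespace RCLike

variable {𝕜 : Type*} [RCLike 𝕜]

theorem star_sqrt_norm_mul_self (z : 𝕜) : star (√‖z‖ : 𝕜) * √‖z‖ = ‖z‖ := by
  rw [star_def, conj_ofReal, ← ofReal_mul, Real.mul_self_sqrt (norm_nonneg z)]

theorem star_sqrt_norm_mul_div (z : 𝕜) : star (√‖z‖ : 𝕜) * (z / √‖z‖) = z := by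
  rcases eq_or_ne z 0 with rfl | hz
  · simp
  · rw [star_def, conj_ofReal, mul_div_cancel₀]
    exact ofReal_ne_zero.mpr (Real.sqrt_ne_zero'.mpr (norm_pos_iff.mpr hz))

theorem star_div_sqrt_norm_mul_sqrt (z : 𝕜) : star (z / √‖z‖) * √‖z‖ = star z := by
  conv_rhs => rw [← star_sqrt_norm_mul_div z, star_mul, star_star]

theorem star_div_sqrt_norm_mul_self (z : 𝕜) : star (z / √‖z‖) * (z / √‖z‖) = ‖z‖ := by
  rw [star_def, conj_mul, norm_div, norm_ofReal, abs_of_nonneg (Real.sqrt_nonneg _),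
    Real.div_sqrt, ← ofReal_pow, Real.sq_sqrt (norm_nonneg z)]

end RCLike

namespace Matrix

variable {ι 𝕜 : Type*} [Fintype ι] [LinearOrder ι] [RCLike 𝕜]

def diagDominanceGap (G : Matrix ι ι 𝕜) (i : ι) : ℝ :=
  RCLike.re (G i i) - ∑ j ∈ univ.erase i, ‖G i j‖

noncomputable def sym2Factor (G : Matrix ι ι 𝕜) : Matrix (Sym2 ι) ι 𝕜 := fun s =>
  if s.IsDiag then Pi.single s.inf (√(diagDominanceGap G s.inf) : 𝕜)
  else
    Pi.single s.inf (√‖G s.inf s.sup‖ : 𝕜) + Pi.single s.sup (G s.inf s.sup / √‖G s.inf s.sup‖)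

variable {G : Matrix ι ι 𝕜}

theorem sym2Factor_mk_self_apply_self (i : ι) :
    sym2Factor G s(i, i) i = √(diagDominanceGap G i) := by
  simp [sym2Factor]

theorem sym2Factor_mk_apply_left {i j : ι} (h : i < j) :
    sym2Factor G s(i, j) i = √‖G i j‖ := by
  simp [sym2Factor, h.ne, h.le]

theorem sym2Factor_mk_apply_right {i j : ι} (h : i < j) :
    sym2Factor G s(i, j) j = G i j / √‖G i j‖ := by
  simp [sym2Factor, h.ne, h.ne', h.le]

theorem mem_of_sym2Factor_ne_zero {s : Sym2 ι} {l : ι} (h : sym2Factor G s l ≠ 0) : l ∈ s := by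
  have hl : l = s.inf ∨ l = s.sup := by
    unfold sym2Factor at h
    by_contra! hl
    split_ifs at h <;> simp [hl.1, hl.2] at h
  induction s with | _ i j
  rcases le_total i j with hij | hij <;> simpa [hij, or_comm] using hl

theorem ncard_setOf_sym2Factor_ne_zero_le_two (s : Sym2 ι) :
    {l | sym2Factor G s l ≠ 0}.ncard ≤ 2 := by
  induction s with | _ i j
  calc {l | sym2Factor G s(i, j) l ≠ 0}.ncard ≤ ({i, j} : Set ι).ncard :=
        Set.ncard_le_ncard (fun l hl => Sym2.mem_iff.mp (mem_of_sym2Factor_ne_zero hl))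
          (Set.toFinite _)
    _ ≤ 2 := (Set.ncard_insert_le _ _).trans (by rw [Set.ncard_singleton])

theorem star_sym2Factor_mk_mul_self (hG : G.IsHermitian)
    (hdom : ∀ i, ∑ j ∈ univ.erase i, ‖G i j‖ ≤ RCLike.re (G i i)) (a j : ι) :
    star (sym2Factor G s(a, j) a) * sym2Factor G s(a, j) a =
      if j = a then (diagDominanceGap G a : 𝕜) else (‖G a j‖ : 𝕜) := by
  rcases lt_trichotomy a j with h | rfl | h
  · rw [if_neg h.ne', sym2Factor_mk_apply_left h, RCLike.star_sqrt_norm_mul_self]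
  · rw [if_pos rfl, sym2Factor_mk_self_apply_self, RCLike.star_def, RCLike.conj_ofReal,
      ← RCLike.ofReal_mul,
      Real.mul_self_sqrt (x := diagDominanceGap G a) (sub_nonneg.mpr (hdom a))]
  · rw [if_neg h.ne, Sym2.eq_swap, sym2Factor_mk_apply_right h,
      RCLike.star_div_sqrt_norm_mul_self, ← hG.apply, norm_star]

theorem star_sym2Factor_mk_mul_of_ne (hG : G.IsHermitian) {a b : ι} (hab : a ≠ b) :
    star (sym2Factor G s(a, b) a) * sym2Factor G s(a, b) b = G a b := by
  rcases hab.lt_or_gt with h | h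
  · rw [sym2Factor_mk_apply_left h, sym2Factor_mk_apply_right h,
      RCLike.star_sqrt_norm_mul_div]
  · rw [Sym2.eq_swap, sym2Factor_mk_apply_left h, sym2Factor_mk_apply_right h,
      RCLike.star_div_sqrt_norm_mul_sqrt, hG.apply]

theorem conjTranspose_sym2Factor_mul_self (hG : G.IsHermitian)
    (hdom : ∀ i, ∑ j ∈ univ.erase i, ‖G i j‖ ≤ RCLike.re (G i i)) :
    (sym2Factor G)ᴴ * sym2Factor G = G := by
  ext a b
  have hsum : ((sym2Factor G)ᴴ * sym2Factor G) a b =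
      ∑ j, star (sym2Factor G s(a, j) a) * sym2Factor G s(a, j) b := by
    simp only [mul_apply, conjTranspose_apply]
    exact Sym2.sum_eq_sum_mk_of_mem a fun s hs =>
      mem_of_sym2Factor_ne_zero (star_ne_zero.mp (left_ne_zero_of_mul hs))
  rw [hsum]
  rcases eq_or_ne a b with rfl | hab
  · simp_rw [star_sym2Factor_mk_mul_self hG hdom a]
    rw [← add_sum_erase _ _ (mem_univ a), if_pos rfl,
      sum_congr rfl fun j hj => if_neg (ne_of_mem_erase hj), diagDominanceGap]
    push_cast
    rw [sub_add_cancel]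
    exact RCLike.conj_eq_iff_re.mp (hG.apply a a)
  · refine (sum_eq_single b (fun j _ hjb => ?_) (by simp)).trans
      (star_sym2Factor_mk_mul_of_ne hG hab)
    by_contra hne
    rcases Sym2.mem_iff.mp (mem_of_sym2Factor_ne_zero (right_ne_zero_of_mul hne)) with h | h
    exacts [hab h.symm, hjb h.symm]

end Matrix

theorem stmt0_general (M : ℕ) (G : Matrix (Fin M) (Fin M) ℂ)
    (hHerm : G.IsHermitian)
    (hdom : ∀ i, ∑ j ∈ Finset.univ.erase i, ‖G i j‖ ≤ (G i i).re) :
    ∃ V : Matrix (Fin (M * (M + 1) / 2)) (Fin M) ℂ,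
      (∀ k, {i | V k i ≠ 0}.ncard ≤ 2) ∧ G = V.conjTranspose * V := by
  have hcard : M * (M + 1) / 2 = Fintype.card (Sym2 (Fin M)) := by
    rw [Sym2.card, Fintype.card_fin, Nat.choose_two_right, Nat.add_sub_cancel, mul_comm]
  let e : Fin (M * (M + 1) / 2) ≃ Sym2 (Fin M) := (finCongr hcard).trans (Fintype.equivFin _).symm
  refine ⟨(Matrix.sym2Factor G).submatrix e id, fun k => ?_, ?_⟩
  · exact Matrix.ncard_setOf_sym2Factor_ne_zero_le_two (e k)
  · rw [Matrix.conjTranspose_submatrix, Matrix.submatrix_mul_equiv,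
      Matrix.conjTranspose_sym2Factor_mul_self hHerm hdom, Matrix.submatrix_id_id]

theorem stmt0 (M : ℕ) (G : Matrix (Fin M) (Fin M) ℂ)
    (hHerm : G.IsHermitian)
    (hpos : ∀ i, 0 < (G i i).re)
    (hdom : ∀ i, ∑ j ∈ Finset.univ.erase i, ‖G i j‖ ≤ (G i i).re) :
    ∃ V : Matrix (Fin (M * (M + 1) / 2)) (Fin M) ℂ,
      (∀ k, {i | V k i ≠ 0}.ncard ≤ 2) ∧ G = V.conjTranspose * V :=
  stmt0_general M G hHerm hdom
end

section
/- Let A be a real symmetric positive semi-definite |X|×|X| matrix with nonneg entries, and let A^{⊗n} be its n-fold Kronecker (tensor) power indexed by X^n. Then the minimum over probability distributions P on X^n of Σ_{x,x'} P(x)P(x') A^{⊗n}_{x,x'} equals the n-th power of the minimum over probability distributions Q on X of Σ_{x,x'} Q(x)Q(x') A_{x,x'}. -/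
/-!
Let `q` minimise `p ↦ p ⬝ᵥ A *ᵥ p` on the simplex, with minimum `λ ≥ 0`. Moving from `q` towards a
vertex `a` cannot decrease the form, which forces `(A *ᵥ q) a ≥ λ` for every `a`. The product
distribution `q^⊗n` attains `λ^n`. Conversely, for a distribution `P` on `Xⁿ`,
`P ⬝ᵥ A^⊗n *ᵥ q^⊗n = ∑ₓ P x ∏ₗ (A *ᵥ q) (x ℓ) ≥ λ^n`, and since `A^⊗n = (B^⊗n)ᴴ B^⊗n` is positive
semidefinite when `A = Bᴴ B`, its form is nonnegative at `P - q^⊗n`, which turns this cross-term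
bound into `P ⬝ᵥ A^⊗n *ᵥ P ≥ λ^n`.
-/

open Finset Matrix Filter Topology
open scoped ComplexOrder

namespace Matrix

variable {X R : Type*}

def tensorPow [CommMonoid R] (A : Matrix X X R) (n : ℕ) : Matrix (Fin n → X) (Fin n → X) R :=
  of fun x y => ∏ ℓ, A (x ℓ) (y ℓ)

def vecTensorPow [CommMonoid R] (v : X → R) (n : ℕ) : (Fin n → X) → R :=
  fun x => ∏ ℓ, v (x ℓ)

@[simp]
theorem tensorPow_apply [CommMonoid R] (A : Matrix X X R) (n : ℕ) (x y : Fin n → X) :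
    A.tensorPow n x y = ∏ ℓ, A (x ℓ) (y ℓ) := rfl

theorem conjTranspose_tensorPow [CommSemiring R] [StarRing R] (A : Matrix X X R) (n : ℕ) :
    (A.tensorPow n)ᴴ = Aᴴ.tensorPow n := by
  ext x y
  simp [star_prod]

variable [Fintype X]

theorem tensorPow_mul [CommSemiring R] (A B : Matrix X X R) (n : ℕ) :
    (A * B).tensorPow n = A.tensorPow n * B.tensorPow n := by
  ext x z
  simp only [tensorPow_apply, mul_apply, Fintype.prod_sum, prod_mul_distrib]

theorem tensorPow_mulVec_vecTensorPow [CommSemiring R] (A : Matrix X X R) (v : X → R) (n : ℕ) :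
    A.tensorPow n *ᵥ vecTensorPow v n = vecTensorPow (A *ᵥ v) n := by
  ext x
  simp only [mulVec, dotProduct, tensorPow_apply, vecTensorPow, Fintype.prod_sum,
    prod_mul_distrib]

theorem vecTensorPow_dotProduct_vecTensorPow [CommSemiring R] (u v : X → R) (n : ℕ) :
    vecTensorPow u n ⬝ᵥ vecTensorPow v n = (u ⬝ᵥ v) ^ n := by
  simp only [dotProduct, vecTensorPow, Fintype.sum_pow, prod_mul_distrib]

theorem PosSemidef.tensorPow {𝕜 : Type*} [RCLike 𝕜] {A : Matrix X X 𝕜} (hA : A.PosSemidef)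
    (n : ℕ) : (A.tensorPow n).PosSemidef := by
  classical
  open scoped MatrixOrder in
  obtain ⟨B, rfl⟩ := CStarAlgebra.nonneg_iff_eq_star_mul_self.mp hA.nonneg
  rw [star_eq_conjTranspose, tensorPow_mul, ← conjTranspose_tensorPow]
  exact posSemidef_conjTranspose_mul_self _

theorem vecTensorPow_mem_stdSimplex {𝕜 : Type*} [CommSemiring 𝕜] [PartialOrder 𝕜]
    [IsOrderedRing 𝕜] {v : X → 𝕜} (hv : v ∈ stdSimplex 𝕜 X) (n : ℕ) :
    vecTensorPow v n ∈ stdSimplex 𝕜 (Fin n → X) :=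
  ⟨fun _ => prod_nonneg fun _ _ => hv.1 _,
    by simp only [vecTensorPow, ← Fintype.sum_pow, hv.2, one_pow]⟩

end Matrix

section QuadraticForm

variable {ι : Type*} [Fintype ι]

theorem Matrix.dotProduct_mulVec_self_eq_sum_sum {R : Type*} [CommSemiring R] (M : Matrix ι ι R)
    (p : ι → R) : p ⬝ᵥ M *ᵥ p = ∑ x, ∑ x', p x * p x' * M x x' := by
  simp only [dotProduct, mulVec, mul_sum]
  exact sum_congr rfl fun x _ => sum_congr rfl fun x' _ => by ring

theorem Matrix.IsSymm.dotProduct_mulVec_comm {R : Type*} [CommSemiring R] {M : Matrix ι ι R}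
    (hM : M.IsSymm) (u v : ι → R) : u ⬝ᵥ M *ᵥ v = v ⬝ᵥ M *ᵥ u := by
  rw [dotProduct_mulVec, ← mulVec_transpose, hM.eq, dotProduct_comm]

theorem Matrix.IsSymm.add_smul_dotProduct_mulVec_add_smul {R : Type*} [CommRing R]
    {M : Matrix ι ι R} (hM : M.IsSymm) (u v : ι → R) (t : R) :
    (u + t • v) ⬝ᵥ M *ᵥ (u + t • v)
      = u ⬝ᵥ M *ᵥ u + 2 * t * (v ⬝ᵥ M *ᵥ u) + t ^ 2 * (v ⬝ᵥ M *ᵥ v) := by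
  simp only [mulVec_add, mulVec_smul, add_dotProduct, dotProduct_add, smul_dotProduct,
    dotProduct_smul, smul_eq_mul, hM.dotProduct_mulVec_comm u v]
  ring

theorem Matrix.PosSemidef.le_dotProduct_mulVec_self_of_le {M : Matrix ι ι ℝ} (hM : M.PosSemidef)
    {p v : ι → ℝ} (h : v ⬝ᵥ M *ᵥ v ≤ p ⬝ᵥ M *ᵥ v) : v ⬝ᵥ M *ᵥ v ≤ p ⬝ᵥ M *ᵥ p := by
  have hM' : M.IsSymm := isHermitian_iff_isSymm.mp hM.isHermitian
  have h_nonneg := hM.dotProduct_mulVec_nonneg (p + (-1 : ℝ) • v)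
  rw [star_trivial, hM'.add_smul_dotProduct_mulVec_add_smul,
    hM'.dotProduct_mulVec_comm v p] at h_nonneg
  linarith

theorem nonneg_of_forall_nonneg_add_mul {a b : ℝ} (h : ∀ t : ℝ, 0 < t → t ≤ 1 → 0 ≤ a + t * b) :
    0 ≤ a := by
  have hlim : Tendsto (fun t : ℝ => a + t * b) (𝓝[>] 0) (𝓝 a) := by
    have hcont : Continuous (fun t : ℝ => a + t * b) := by fun_prop
    simpa using (hcont.tendsto 0).mono_left nhdsWithin_le_nhds
  refine ge_of_tendsto hlim ?_
  filter_upwards [Ioc_mem_nhdsGT zero_lt_one] with t ht using h t ht.1 ht.2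

theorem Matrix.IsSymm.le_mulVec_of_isMinOn_stdSimplex {M : Matrix ι ι ℝ} (hM : M.IsSymm)
    {q : ι → ℝ} (hq : q ∈ stdSimplex ℝ ι)
    (hmin : IsMinOn (fun p => p ⬝ᵥ M *ᵥ p) (stdSimplex ℝ ι) q) (i : ι) :
    q ⬝ᵥ M *ᵥ q ≤ (M *ᵥ q) i := by
  classical
  set e : ι → ℝ := Pi.single i 1
  have hcross : (e - q) ⬝ᵥ M *ᵥ q = (M *ᵥ q) i - q ⬝ᵥ M *ᵥ q := by
    simp [e, sub_dotProduct, single_dotProduct]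
  suffices 0 ≤ 2 * ((e - q) ⬝ᵥ M *ᵥ q) by linarith
  refine nonneg_of_forall_nonneg_add_mul (b := (e - q) ⬝ᵥ M *ᵥ (e - q)) fun t ht0 ht1 => ?_
  have hmem : q + t • (e - q) ∈ stdSimplex ℝ ι :=
    (convex_stdSimplex ℝ ι).add_smul_sub_mem hq (single_mem_stdSimplex ℝ i) ⟨ht0.le, ht1⟩
  have hle := isMinOn_iff.mp hmin _ hmem
  rw [hM.add_smul_dotProduct_mulVec_add_smul] at hle
  have : 0 ≤ t * (2 * ((e - q) ⬝ᵥ M *ᵥ q) + t * ((e - q) ⬝ᵥ M *ᵥ (e - q))) := by linarith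
  exact nonneg_of_mul_nonneg_right this ht0

theorem le_dotProduct_of_mem_stdSimplex {𝕜 : Type*} [CommSemiring 𝕜] [PartialOrder 𝕜]
    [IsOrderedRing 𝕜] {p f : ι → 𝕜} (hp : p ∈ stdSimplex 𝕜 ι) {c : 𝕜} (hc : ∀ i, c ≤ f i) :
    c ≤ p ⬝ᵥ f :=
  calc c = ∑ i, p i * c := by rw [← sum_mul, hp.2, one_mul]
  _ ≤ p ⬝ᵥ f := sum_le_sum fun i _ => mul_le_mul_of_nonneg_left (hc i) (hp.1 i)

theorem exists_isMinOn_dotProduct_mulVec_stdSimplex [Nonempty ι] (M : Matrix ι ι ℝ) :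
    ∃ q ∈ stdSimplex ℝ ι, IsMinOn (fun p => p ⬝ᵥ M *ᵥ p) (stdSimplex ℝ ι) q := by
  classical
  exact (isCompact_stdSimplex ℝ ι).exists_isMinOn
    ⟨_, single_mem_stdSimplex ℝ (Classical.arbitrary ι)⟩ (by fun_prop)

theorem image_stdSimplex_dotProduct_mulVec_self (M : Matrix ι ι ℝ) :
    (fun p => p ⬝ᵥ M *ᵥ p) '' stdSimplex ℝ ι =
      {v | ∃ P : ι → ℝ, (∀ x, 0 ≤ P x) ∧ ∑ x, P x = 1 ∧ v = ∑ x, ∑ x', P x * P x' * M x x'} := by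
  ext v
  simp only [Set.mem_image, stdSimplex, Set.mem_ofPred_eq, dotProduct_mulVec_self_eq_sum_sum,
    eq_comm (a := v), and_assoc]

end QuadraticForm

theorem Matrix.PosSemidef.isLeast_tensorPow {X : Type*} [Fintype X] {A : Matrix X X ℝ}
    (hA : A.PosSemidef) {q : X → ℝ} (hq : q ∈ stdSimplex ℝ X)
    (hmin : IsMinOn (fun p => p ⬝ᵥ A *ᵥ p) (stdSimplex ℝ X) q) (n : ℕ) :
    IsLeast ((fun p => p ⬝ᵥ A.tensorPow n *ᵥ p) '' stdSimplex ℝ (Fin n → X))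
      ((q ⬝ᵥ A *ᵥ q) ^ n) := by
  have hval : vecTensorPow q n ⬝ᵥ A.tensorPow n *ᵥ vecTensorPow q n = (q ⬝ᵥ A *ᵥ q) ^ n := by
    rw [tensorPow_mulVec_vecTensorPow, vecTensorPow_dotProduct_vecTensorPow]
  refine ⟨⟨_, vecTensorPow_mem_stdSimplex hq n, hval⟩, ?_⟩
  rintro _ ⟨p, hp, rfl⟩
  rw [← hval]
  refine (hA.tensorPow n).le_dotProduct_mulVec_self_of_le ?_
  rw [hval, tensorPow_mulVec_vecTensorPow]
  refine le_dotProduct_of_mem_stdSimplex hp fun x => ?_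
  have hkkt := (isHermitian_iff_isSymm.mp hA.isHermitian).le_mulVec_of_isMinOn_stdSimplex hq hmin
  have hnonneg : 0 ≤ q ⬝ᵥ A *ᵥ q := by simpa using hA.dotProduct_mulVec_nonneg q
  simpa [vecTensorPow] using prod_le_prod (s := univ) (fun _ _ => hnonneg) fun ℓ _ => hkkt (x ℓ)

theorem stmt3_general (X : Type) [Fintype X] [Nonempty X] (A : Matrix X X ℝ)
    (hA : A.PosSemidef) (n : ℕ) :
    sInf {v : ℝ | ∃ P : (Fin n → X) → ℝ, (∀ x, 0 ≤ P x) ∧ ∑ x, P x = 1 ∧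
        v = ∑ x, ∑ x', P x * P x' * ∏ ℓ, A (x ℓ) (x' ℓ)}
      = (sInf {v : ℝ | ∃ Q : X → ℝ, (∀ x, 0 ≤ Q x) ∧ ∑ x, Q x = 1 ∧
        v = ∑ x, ∑ x', Q x * Q x' * A x x'}) ^ n := by
  obtain ⟨q, hq, hmin⟩ := exists_isMinOn_dotProduct_mulVec_stdSimplex A
  have hsets := image_stdSimplex_dotProduct_mulVec_self (A.tensorPow n)
  simp only [tensorPow_apply] at hsets
  rw [← hsets, ← image_stdSimplex_dotProduct_mulVec_self A,
    (hA.isLeast_tensorPow hq hmin n).csInf_eq,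
    IsLeast.csInf_eq ⟨Set.mem_image_of_mem _ hq, Set.forall_mem_image.2 (isMinOn_iff.mp hmin)⟩]

theorem stmt3 (X : Type) [Fintype X] [Nonempty X] (A : Matrix X X ℝ)
    (hA : A.PosSemidef) (hnn : ∀ x x', 0 ≤ A x x') (n : ℕ) :
    sInf {v : ℝ | ∃ P : (Fin n → X) → ℝ, (∀ x, 0 ≤ P x) ∧ ∑ x, P x = 1 ∧
        v = ∑ x, ∑ x', P x * P x' * ∏ ℓ, A (x ℓ) (x' ℓ)}
      = (sInf {v : ℝ | ∃ Q : X → ℝ, (∀ x, 0 ≤ Q x) ∧ ∑ x, Q x = 1 ∧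
        v = ∑ x, ∑ x', Q x * Q x' * A x x'}) ^ n :=
  stmt3_general X A hA n
end

section
/- Let ρ be a density matrix (positive semi-definite, trace one) and F a positive semi-definite operator with F ≤ 1 (i.e., 1 − F is positive semi-definite) on a finite-dimensional Hilbert space, such that Tr[ρF] = 1. Then F ≥ Π_ρ, where Π_ρ is the orthogonal projector onto the support of ρ. -/
/-!
Since `1 - F` and `ρ` are positive semidefinite and `Tr[(1 - F) ρ] = Tr ρ - Tr[ρ F] = 0`, the
product `(1 - F) ρ` vanishes. So `F` fixes the range of `ρ`, which is the range of `Π`, i.e.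
`F Π = Π = Π F`, and then `F - Π = (1 - Π) F (1 - Π) ≥ 0`.
-/

open scoped ComplexOrder

namespace Matrix

theorem mul_eq_zero_of_range_le {R : Type*} [CommSemiring R] {l m n : Type*} [Fintype m]
    [Fintype n] {G : Matrix l m R} {A B : Matrix m n R} (hGA : G * A = 0)
    (hBA : LinearMap.range B.mulVecLin ≤ LinearMap.range A.mulVecLin) : G * B = 0 := by
  classical
  have hA : LinearMap.range A.mulVecLin ≤ LinearMap.ker G.mulVecLin := by
    rw [LinearMap.range_le_ker_iff, ← mulVecLin_mul, hGA, mulVecLin_zero]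
  have hB : G.mulVecLin ∘ₗ B.mulVecLin = 0 := LinearMap.range_le_ker_iff.mp (hBA.trans hA)
  rw [← mulVecLin_mul, ← toLin'_apply'] at hB
  exact toLin'.map_eq_zero_iff.mp hB

section PosSemidef

open scoped MatrixOrder

variable {𝕜 : Type*} [RCLike 𝕜] {n : Type*} [Fintype n]

theorem PosSemidef.mul_eq_zero_of_trace_mul_eq_zero {A B : Matrix n n 𝕜}
    (hA : A.PosSemidef) (hB : B.PosSemidef) (h : (A * B).trace = 0) : A * B = 0 := by
  classical
  obtain ⟨X, rfl⟩ := CStarAlgebra.nonneg_iff_eq_star_mul_self.mp hA.nonneg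
  obtain ⟨Y, rfl⟩ := CStarAlgebra.nonneg_iff_eq_star_mul_self.mp hB.nonneg
  simp only [star_eq_conjTranspose] at h ⊢
  -- `Tr[Xᴴ X Yᴴ Y]` is the squared Frobenius norm of `Y Xᴴ`.
  have hYX : Y * Xᴴ = 0 := by
    rw [← trace_conjTranspose_mul_self_eq_zero_iff, ← h, conjTranspose_mul,
      conjTranspose_conjTranspose, trace_mul_comm (Xᴴ * X), Matrix.mul_assoc, trace_mul_comm X]
    simp only [Matrix.mul_assoc]
  calc Xᴴ * X * (Yᴴ * Y) = Xᴴ * (Y * Xᴴ)ᴴ * Y := by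
        simp only [conjTranspose_mul, conjTranspose_conjTranspose, Matrix.mul_assoc]
    _ = 0 := by rw [hYX, conjTranspose_zero, Matrix.mul_zero, Matrix.zero_mul]

theorem PosSemidef.sub_of_mul_eq_self [DecidableEq n] {F P : Matrix n n 𝕜} (hF : F.PosSemidef)
    (hP : P.IsHermitian) (hPP : P * P = P) (hFP : F * P = P) : (F - P).PosSemidef := by
  have hPF : P * F = P := by
    simpa only [conjTranspose_mul, hP.eq, hF.isHermitian.eq] using congrArg (·ᴴ) hFP
  have hQ : (1 - P)ᴴ = 1 - P := by rw [conjTranspose_sub, hP.eq, conjTranspose_one]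
  have hcompress : (1 - P) * F * (1 - P) = F - P := by
    rw [Matrix.sub_mul, Matrix.one_mul, hPF, Matrix.mul_sub, Matrix.mul_one, Matrix.sub_mul, hFP,
      hPP, sub_self, sub_zero]
  have := hF.mul_mul_conjTranspose_same (1 - P)
  rwa [hQ, hcompress] at this

end PosSemidef

end Matrix

theorem stmt6 (d : ℕ) (ρ F Pr : Matrix (Fin d) (Fin d) ℂ)
    (hρ : ρ.PosSemidef) (hTrρ : ρ.trace = 1)
    (hF : F.PosSemidef) (hF1 : (1 - F).PosSemidef)
    (hTr : (ρ * F).trace = 1)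
    (hPrH : Pr.IsHermitian) (hPr2 : Pr * Pr = Pr)
    (hrange : LinearMap.range Pr.mulVecLin = LinearMap.range ρ.mulVecLin) :
    (F - Pr).PosSemidef := by
  have htrace : ((1 - F) * ρ).trace = 0 := by
    rw [Matrix.sub_mul, Matrix.one_mul, Matrix.trace_sub, hTrρ, Matrix.trace_mul_comm, hTr,
      sub_self]
  have hF1ρ : (1 - F) * ρ = 0 := hF1.mul_eq_zero_of_trace_mul_eq_zero hρ htrace
  have hFPr : F * Pr = Pr := by
    have := Matrix.mul_eq_zero_of_range_le hF1ρ hrange.le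
    rwa [Matrix.sub_mul, Matrix.one_mul, sub_eq_zero, eq_comm] at this
  exact hF.sub_of_mul_eq_self hPrH hPr2 hFPr
end

section
/- Let ψ_1,…,ψ_M be unit vectors in a finite-dimensional Hilbert space whose Gram matrix G (with G_{ij} = ⟨ψ_i, ψ_j⟩) satisfies Σ_{j≠i} |G_{ij}| ≤ 1 for every i. Then there exists an orthonormal family {e_k} of a larger Hilbert space, an isometry embedding the span of the ψ_i into it, such that for each k, ⟨e_k, ψ_i⟩ ≠ 0 for at most two indices i. -/
/-!
Write the Gram matrix as `G = 1 + A` with `A` Hermitian of zero diagonal. Each ordered pair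
`(p, q)` gives a row supported on `{p, q}` whose rank-one contribution to `Vᴴ * V` carries
`A p q / 2` at `(p, q)`, its conjugate at `(q, p)`, and `‖A p q‖ / 2` at `(p, p)` and `(q, q)`;
diagonal dominance says exactly that the remaining diagonal `1 - ∑ j, ‖A i j‖` is nonnegative,
so it is supplied by a diagonal block of rows. This gives `G = Vᴴ * V` with rows of `V` having at
most two nonzero entries. The columns of `V` then have the same Gram matrix as the `ψ i`, and
families with equal Gram matrices differ by a linear isometry.
-/

open Matrix Finset Module ComplexConjugate

theorem Set.ncard_le_two_of_subset_pair {α : Type*} {s : Set α} {a b : α} (h : s ⊆ {a, b}) :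
    s.ncard ≤ 2 :=
  calc s.ncard ≤ ({a, b} : Set α).ncard := Set.ncard_le_ncard h (Set.toFinite _)
    _ ≤ ({b} : Set α).ncard + 1 := Set.ncard_insert_le a {b}
    _ = 2 := by rw [Set.ncard_singleton]

theorem LinearMap.exists_linearIsometry_range_apply_eq {R M E F : Type*} [Ring R] [AddCommGroup M]
    [Module R M] [SeminormedAddCommGroup E] [Module R E] [NormedAddCommGroup F] [Module R F]
    (A : M →ₗ[R] E) (B : M →ₗ[R] F) (h : ∀ c, ‖A c‖ = ‖B c‖) :
    ∃ T : range A →ₗᵢ[R] F, ∀ c, T ⟨A c, mem_range_self A c⟩ = B c := by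
  have hker : ker A ≤ ker B := fun c hc => by
    rw [mem_ker, ← norm_eq_zero, ← h, mem_ker.1 hc, norm_zero]
  let T := (ker A).liftQ B hker ∘ₗ A.quotKerEquivRange.symm.toLinearMap
  have hT : ∀ c, T ⟨A c, mem_range_self A c⟩ = B c := fun c => by
    simp [T, quotKerEquivRange_symm_apply_image]
  refine ⟨⟨T, ?_⟩, hT⟩
  rintro ⟨_, c, rfl⟩
  rw [hT, ← h]
  rfl

section

variable {𝕜 : Type*} [RCLike 𝕜]

theorem RCLike.exists_conj_mul_eq (a : 𝕜) :
    ∃ x y : 𝕜, conj x * y = a ∧ conj x * x = ‖a‖ ∧ conj y * y = ‖a‖ := by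
  rcases eq_or_ne a 0 with rfl | ha
  · exact ⟨0, 0, by simp⟩
  have hsq : (√‖a‖ : 𝕜) * √‖a‖ = ‖a‖ := by
    rw [← RCLike.ofReal_mul, Real.mul_self_sqrt (norm_nonneg a)]
  have hx : (√‖a‖ : 𝕜) ≠ 0 := by simpa using ha
  refine ⟨√‖a‖, a / √‖a‖, ?_, ?_, ?_⟩
  · rw [RCLike.conj_ofReal, mul_div_cancel₀ _ hx]
  · rw [RCLike.conj_ofReal, hsq]
  · rw [map_div₀, RCLike.conj_ofReal, div_mul_div_comm, RCLike.conj_mul, hsq]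
    have : (‖a‖ : 𝕜) ≠ 0 := by simpa using ha
    field_simp

namespace Matrix

variable {ι : Type*} [Fintype ι] [DecidableEq ι]

theorem IsHermitian.exists_conjTranspose_mul_eq_diagonal_add {A : Matrix ι ι 𝕜}
    (hA : A.IsHermitian) :
    ∃ W : Matrix (ι × ι) ι 𝕜, Wᴴ * W = diagonal (fun i => ∑ j, (‖A i j‖ : 𝕜)) + A ∧
      ∀ p q, {i | W (p, q) i ≠ 0} ⊆ {p, q} := by
  choose x y hxy hx hy using fun p q => RCLike.exists_conj_mul_eq (A p q / 2)
  have hyx : ∀ p q, conj (y p q) * x p q = A q p / 2 := fun p q => by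
    rw [← hA.apply q p, RCLike.star_def, ← map_ofNat (starRingEnd 𝕜) 2, ← map_div₀, ← hxy,
      map_mul, RCLike.conj_conj, mul_comm]
  have hnorm : ∀ p q, ‖A p q‖ = ‖A q p‖ := fun p q => by rw [← hA.apply p q, norm_star]
  refine ⟨of fun pq => Pi.single pq.1 (x pq.1 pq.2) + Pi.single pq.2 (y pq.1 pq.2), ?_, ?_⟩
  · ext i j
    simp only [mul_apply, conjTranspose_apply, of_apply, Pi.add_apply, Pi.single_apply, star_add,
      RCLike.star_def, apply_ite (starRingEnd 𝕜), map_zero, mul_add, mul_ite, add_mul, ite_mul, hx,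
      norm_div, RCLike.norm_ofNat, map_div₀, zero_mul, hyx, mul_zero, hxy, hy, sum_add_distrib,
      Fintype.sum_prod_type, sum_ite_irrel, sum_const_zero, sum_ite_eq, mem_univ, ↓reduceIte,
      add_apply, diagonal_apply]
    rcases eq_or_ne i j with rfl | hij
    · have hcol : ∑ k, (‖A k i‖ : 𝕜) = ∑ k, (‖A i k‖ : 𝕜) := sum_congr rfl fun k _ => by rw [hnorm]
      simp only [if_true, RCLike.algebraMap_eq_ofReal, RCLike.ofReal_ofNat, ← sum_div, hcol]
      ring
    · simp [hij]
  · intro p q i hi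
    by_contra hpq
    simp only [Set.mem_insert_iff, Set.mem_singleton_iff, not_or] at hpq
    simp [hpq.1, hpq.2] at hi

theorem IsHermitian.exists_conjTranspose_mul_eq_of_diagDominant {G : Matrix ι ι 𝕜}
    (hG : G.IsHermitian) (hdiag : ∀ i, G i i = 1) (hdom : ∀ i, ∑ j ∈ univ.erase i, ‖G i j‖ ≤ 1) :
    ∃ V : Matrix (ι ⊕ ι × ι) ι 𝕜, Vᴴ * V = G ∧ ∀ k, {i | V k i ≠ 0}.ncard ≤ 2 := by
  obtain ⟨W, hW, hWsupp⟩ := (hG.sub isHermitian_one).exists_conjTranspose_mul_eq_diagonal_add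
  have hrow : ∀ i, ∑ j, ‖(G - 1) i j‖ = ∑ j ∈ univ.erase i, ‖G i j‖ := fun i => by
    rw [← sum_erase_add _ _ (mem_univ i), sub_apply, hdiag, one_apply_eq, sub_self, norm_zero,
      add_zero]
    refine sum_congr rfl fun j hj => ?_
    rw [sub_apply, one_apply_ne (ne_of_mem_erase hj).symm, sub_zero]
  let d i : 𝕜 := √(1 - ∑ j, ‖(G - 1) i j‖)
  have hd : ∀ i, star (d i) * d i = 1 - ∑ j, (‖(G - 1) i j‖ : 𝕜) := fun i => by
    rw [RCLike.star_def, RCLike.conj_ofReal, ← RCLike.ofReal_mul,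
      Real.mul_self_sqrt (by linarith [hrow i, hdom i])]
    push_cast
    rfl
  refine ⟨fromRows (diagonal d) W, ?_, ?_⟩
  · rw [conjTranspose_fromRows_eq_fromCols_conjTranspose, fromCols_mul_fromRows, hW,
      diagonal_conjTranspose, diagonal_mul_diagonal, ← add_assoc, diagonal_add]
    simp only [Pi.star_apply, hd, sub_add_cancel, diagonal_one, add_sub_cancel]
  · rintro (p | ⟨p, q⟩)
    · refine Set.ncard_le_two_of_subset_pair (a := p) (b := p) fun i hi => ?_
      by_contra hip
      exact hi (diagonal_apply_ne d fun h => hip (by simp [h]))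
    · exact Set.ncard_le_two_of_subset_pair (hWsupp p q)

end Matrix

variable {ι : Type*} [Fintype ι]

theorem exists_linearIsometry_apply_eq_of_gram_eq {V : Type*} [NormedAddCommGroup V]
    [InnerProductSpace 𝕜 V] [FiniteDimensional 𝕜 V] {v w : ι → V} (h : gram 𝕜 v = gram 𝕜 w) :
    ∃ U : V →ₗᵢ[𝕜] V, ∀ i, U (v i) = w i := by
  classical
  have hnorm : ∀ c, ‖Fintype.linearCombination 𝕜 v c‖ = ‖Fintype.linearCombination 𝕜 w c‖ := by
    intro c
    have hinner := star_dotProduct_gram_mulVec v c c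
    rw [h, star_dotProduct_gram_mulVec] at hinner
    rw [← sq_eq_sq₀ (norm_nonneg _) (norm_nonneg _), ← inner_self_eq_norm_sq (𝕜 := 𝕜),
      ← inner_self_eq_norm_sq (𝕜 := 𝕜), Fintype.linearCombination_apply,
      Fintype.linearCombination_apply, hinner]
  obtain ⟨T, hT⟩ := LinearMap.exists_linearIsometry_range_apply_eq _ _ hnorm
  refine ⟨T.extend, fun i => ?_⟩
  simpa using (T.extend_apply _).trans (hT (Pi.single i 1))

theorem exists_linearIsometry_apply_eq_of_gram_eq_conjTranspose_mul {H : Type*}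
    [NormedAddCommGroup H] [InnerProductSpace 𝕜 H] [FiniteDimensional 𝕜 H] {K : Type*} [Fintype K]
    (ψ : ι → H) (V : Matrix K ι 𝕜) (h : gram 𝕜 ψ = Vᴴ * V) :
    ∃ J : H →ₗᵢ[𝕜] EuclideanSpace 𝕜 (K ⊕ Fin (finrank 𝕜 H)),
      ∀ i, J (ψ i) = WithLp.toLp 2 (Sum.elim (Vᵀ i) 0) := by
  classical
  -- the extra `Fin (finrank 𝕜 H)` coordinates leave room for an isometric copy of `H`
  let b := (stdOrthonormalBasis 𝕜 H).toBasis
  let e : Fin (finrank 𝕜 H) → EuclideanSpace 𝕜 (K ⊕ Fin (finrank 𝕜 H)) :=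
    fun j => EuclideanSpace.single (Sum.inr j) 1
  have he : Orthonormal 𝕜 (b.constr 𝕜 e ∘ b) := by
    convert EuclideanSpace.orthonormal_single.comp _ Sum.inr_injective
    exact funext (b.constr_basis 𝕜 e)
  let φ := (b.constr 𝕜 e).isometryOfOrthonormal
    (by simp [b, (stdOrthonormalBasis 𝕜 H).orthonormal]) he
  obtain ⟨U, hU⟩ := exists_linearIsometry_apply_eq_of_gram_eq (𝕜 := 𝕜)
    (v := φ ∘ ψ) (w := fun i => WithLp.toLp 2 (Sum.elim (Vᵀ i) 0)) <| calc
      gram 𝕜 (φ ∘ ψ) = gram 𝕜 ψ := by ext; simp [gram_apply]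
      _ = Vᴴ * V := h
      _ = _ := by ext; simp [gram_apply, mul_apply, mul_comm, PiLp.inner_apply, Fintype.sum_sum_type]
  exact ⟨U.comp φ, hU⟩

end

theorem stmt9 {H : Type*} [NormedAddCommGroup H] [InnerProductSpace ℂ H]
    [FiniteDimensional ℂ H]
    (M : ℕ) (ψ : Fin M → H) (hunit : ∀ i, ‖ψ i‖ = 1)
    (hdom : ∀ i, ∑ j ∈ Finset.univ.erase i, ‖(inner ℂ (ψ i) (ψ j) : ℂ)‖ ≤ 1) :
    ∃ (N : ℕ) (J : H →ₗᵢ[ℂ] EuclideanSpace ℂ (Fin N)),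
      ∀ k : Fin N, {i | J (ψ i) k ≠ 0}.ncard ≤ 2 := by
  obtain ⟨V, hV, hsparse⟩ := (isHermitian_gram ℂ ψ).exists_conjTranspose_mul_eq_of_diagDominant
    (fun i => by simp [gram_apply, hunit]) hdom
  obtain ⟨J, hJ⟩ := exists_linearIsometry_apply_eq_of_gram_eq_conjTranspose_mul ψ V hV.symm
  let e := Fintype.equivFin ((Fin M ⊕ Fin M × Fin M) ⊕ Fin (finrank ℂ H))
  refine ⟨_, (LinearIsometryEquiv.piLpCongrLeft 2 ℂ ℂ e).toLinearIsometry.comp J, fun n => ?_⟩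
  have hJe : ∀ i, ((LinearIsometryEquiv.piLpCongrLeft 2 ℂ ℂ e).toLinearIsometry.comp J) (ψ i) n =
      Sum.elim (Vᵀ i) 0 (e.symm n) := fun i => by simp [hJ]
  simp only [hJe]
  rcases e.symm n with k | _
  · exact hsparse k
  · simp
end
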